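/- Let X ⊂ ℝⁿ be a finite set of points with sup_{x∈X} ‖x‖ ≤ R, let C_R = conv(f_R(X ∪ {0})) and let S_R be the closure of the set difference of the closed ball B(0,2R) and the preimage f_R⁻¹(C_R). Then S_R is starshaped with respect to the origin: for every x ∈ S_R and s ∈ [0,1], s·x ∈ S_R. -/

import Mathlib

noncomputable def sphereFlip {n : ℕ} (R : ℝ) (x : EuclideanSpace ℝ (Fin n)) :
    EuclideanSpace ℝ (Fin n) :=
  ((2 * R - ‖x‖) / ‖x‖) • x

noncomputable def starSet {n : ℕ} (R : ℝ) (X : Set (EuclideanSpace ℝ (Fin n))) :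
    Set (EuclideanSpace ℝ (Fin n)) :=
  closure (Metric.closedBall 0 (2 * R) \
    sphereFlip R ⁻¹' (convexHull ℝ (sphereFlip R '' (X ∪ {0}))))

/-! Shrinking a point `y` of the ball `B(0, 2R)` towards the origin moves its image `f_R y`
outwards along the same ray: `f_R y = t • f_R (s • y)` with `t ∈ [0, 1]`. Hence a point outside
`f_R⁻¹(C)` stays outside after shrinking whenever `C` is starshaped at `0`, so
`B(0, 2R) \ f_R⁻¹(C)` is invariant under the scalings `s ∈ (0, 1]`, and its closure is starshaped
at the origin. -/

open Filter Topology Metric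

theorem starConvex_zero_closure_of_smul_mem {E : Type*} [AddCommGroup E] [Module ℝ E]
    [TopologicalSpace E] [ContinuousSMul ℝ E] {S : Set E}
    (hS : ∀ y ∈ S, ∀ s : ℝ, 0 < s → s ≤ 1 → s • y ∈ S) :
    StarConvex ℝ 0 (closure S) := by
  refine starConvex_zero_iff.2 fun x hx s hs0 hs1 => ?_
  rcases hs0.eq_or_lt with rfl | hs0
  · obtain ⟨z, hz⟩ := closure_nonempty_iff.1 ⟨x, hx⟩
    have hcont : Continuous fun t : ℝ => t • z := continuous_id.smul continuous_const
    have hlim : Tendsto (fun t : ℝ => t • z) (𝓝[>] 0) (𝓝 ((0 : ℝ) • z)) :=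
      (hcont.tendsto 0).mono_left nhdsWithin_le_nhds
    rw [zero_smul] at hlim ⊢
    refine mem_closure_of_tendsto hlim ?_
    filter_upwards [Ioc_mem_nhdsGT one_pos] with t ht using hS z hz t ht.1 ht.2
  · exact map_mem_closure (continuous_const_smul s) hx fun y hy => hS y hy s hs0 hs1

section SphereFlip

variable {n : ℕ} {R : ℝ}

theorem sphereFlip_zero : sphereFlip (n := n) R 0 = 0 := by
  simp [sphereFlip]

theorem sphereFlip_eq_smul_sphereFlip_smul {s : ℝ} {y : EuclideanSpace ℝ (Fin n)}
    (hs : 0 < s) (hy : y ≠ 0) (hsy : 2 * R - s * ‖y‖ ≠ 0) :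
    sphereFlip R y = ((2 * R - ‖y‖) / (2 * R - s * ‖y‖)) • sphereFlip R (s • y) := by
  simp only [sphereFlip, norm_smul, Real.norm_of_nonneg hs.le, smul_smul]
  congr 1
  rw [← mul_assoc, div_mul_div_cancel₀ hsy]
  field_simp

theorem smul_mem_closedBall_diff_preimage_sphereFlip {C : Set (EuclideanSpace ℝ (Fin n))}
    (hC : StarConvex ℝ 0 C) {s : ℝ} (hs0 : 0 < s) (hs1 : s ≤ 1)
    {y : EuclideanSpace ℝ (Fin n)} (hy : y ∈ closedBall 0 (2 * R) \ sphereFlip R ⁻¹' C) :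
    s • y ∈ closedBall 0 (2 * R) \ sphereFlip R ⁻¹' C := by
  rcases hs1.eq_or_lt with rfl | hs1
  · rwa [one_smul]
  rcases eq_or_ne y 0 with rfl | hy0
  · rwa [smul_zero]
  obtain ⟨hball, hyC⟩ := hy
  rw [mem_closedBall_zero_iff] at hball
  have hnorm : 0 < ‖y‖ := norm_pos_iff.2 hy0
  have hden : 0 < 2 * R - s * ‖y‖ := by nlinarith
  refine ⟨?_, fun hsyC => hyC ?_⟩
  · rw [mem_closedBall_zero_iff, norm_smul, Real.norm_of_nonneg hs0.le]
    nlinarith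
  · rw [Set.mem_preimage, sphereFlip_eq_smul_sphereFlip_smul hs0 hy0 hden.ne']
    exact hC.smul_mem hsyC (div_nonneg (by linarith) hden.le) ((div_le_one hden).2 (by nlinarith))

theorem starConvex_zero_starSet (X : Set (EuclideanSpace ℝ (Fin n))) :
    StarConvex ℝ 0 (starSet R X) := by
  have hC : StarConvex ℝ 0 (convexHull ℝ (sphereFlip R '' (X ∪ {0}))) :=
    (convex_convexHull ℝ _).starConvex
      (subset_convexHull ℝ _ ⟨0, Or.inr rfl, sphereFlip_zero⟩)
  exact starConvex_zero_closure_of_smul_mem fun y hy s hs0 hs1 =>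
    smul_mem_closedBall_diff_preimage_sphereFlip hC hs0 hs1 hy

end SphereFlip

theorem starSet_starshaped_general {n : ℕ} (R : ℝ)
    (X : Set (EuclideanSpace ℝ (Fin n))) :
    ∀ x ∈ starSet R X, ∀ s ∈ Set.Icc (0 : ℝ) 1, s • x ∈ starSet R X :=
  fun _ hx _ hs => (starConvex_zero_starSet X).smul_mem hx hs.1 hs.2

theorem starSet_starshaped {n : ℕ} (R : ℝ) (hR : 0 < R)
    (X : Set (EuclideanSpace ℝ (Fin n))) (hX : X.Finite)
    (hXR : ∀ x ∈ X, ‖x‖ ≤ R) :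
    ∀ x ∈ starSet R X, ∀ s ∈ Set.Icc (0 : ℝ) 1, s • x ∈ starSet R X :=
  starSet_starshaped_general R X
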